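/- Assume α + β ≤ 1/(n−1). Let i, j ∈ V with i ≠ j. If at time t either i ∈ N_j^+(t) and B_t = 1, or i ∈ N_j^-(t) and D_t = 1, then after one step of the state-flipping update, |s_j(t+1)| ≤ min{α, β}·|s_i(t)| + (1 − min{α, β})·M(t). -/

import Mathlib

/-!
With `c = α B_t` and `d = β D_t` the update reads
`s_j(t+1) = (1 - c |N_j^+| - d |N_j^-|) s_j + c ∑_{k ∈ N_j^+} s_k - d ∑_{k ∈ N_j^-} s_k`.
Since `|N_j^±| ≤ n - 1`, the hypothesis `α + β ≤ 1/(n-1)` makes the coefficient of `s_j`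
nonnegative, so the absolute values of all coefficients sum to one. By the triangle inequality,
`|s_j(t+1)|` is at most an average of the `|s_k|` in which `|s_i|` has weight `γ = α` or
`γ = β`; bounding every other `|s_k|` by `M` gives `γ |s_i| + (1 - γ) M`, which can only increase
when `γ` is lowered to `min α β`, because `|s_i| ≤ M`.
-/

/-- The maximum absolute state `M = max_{i ∈ V} |x i|`. -/
noncomputable def Mmax {n : ℕ} (hn : 3 ≤ n) (x : Fin n → ℝ) : ℝ :=
  Finset.univ.sup' ⟨⟨0, by omega⟩, Finset.mem_univ _⟩ fun i => |x i|

open Finset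

lemma abs_le_Mmax {n : ℕ} (hn : 3 ≤ n) (x : Fin n → ℝ) (k : Fin n) : |x k| ≤ Mmax hn x :=
  le_sup' (fun i => |x i|) (mem_univ k)

lemma cast_card_le_card_sub_one_of_notMem {ι : Type*} [Fintype ι] {A : Finset ι} {j : ι}
    (hj : j ∉ A) : (#A : ℝ) ≤ Fintype.card ι - 1 := by
  have h : #A + 1 ≤ Fintype.card ι := card_lt_univ_of_notMem hj
  have h' : (#A : ℝ) + 1 ≤ Fintype.card ι := by exact_mod_cast h
  linarith

lemma mul_add_one_sub_mul_le_of_le {m γ x M : ℝ} (hm : m ≤ γ) (hx : x ≤ M) :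
    γ * x + (1 - γ) * M ≤ m * x + (1 - m) * M := by
  nlinarith [mul_nonneg (sub_nonneg.2 hm) (sub_nonneg.2 hx)]

lemma mul_mem_Icc_of_eq_zero_or_eq_one {a B : ℝ} (ha : 0 ≤ a) (hB : B = 0 ∨ B = 1) :
    a * B ∈ Set.Icc 0 a := by
  rcases hB with rfl | rfl <;> simpa using ha

lemma sum_le_add_card_sub_one_mul_of_mem {ι : Type*} {f : ι → ℝ} {A : Finset ι} {i : ι}
    {M : ℝ} (hi : i ∈ A) (hf : ∀ k ∈ A, f k ≤ M) : ∑ k ∈ A, f k ≤ f i + (#A - 1) * M := by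
  classical
  rw [← sum_erase_add A f hi, add_comm, ← cast_card_erase_of_mem hi]
  gcongr
  simpa using sum_le_card_nsmul (A.erase i) f M fun k hk => hf k (mem_of_mem_erase hk)

section FlipUpdate

variable {ι : Type*} (s : ι → ℝ) {a b M : ℝ} (P N : Finset ι) (j : ι)

lemma abs_flip_update_le (ha : 0 ≤ a) (hb : 0 ≤ b) (hab : a * #P + b * #N ≤ 1) :
    |s j - a * ∑ k ∈ P, (s j - s k) - b * ∑ k ∈ N, (s j + s k)|
      ≤ (1 - a * #P - b * #N) * |s j| + a * ∑ k ∈ P, |s k| + b * ∑ k ∈ N, |s k| := by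
  have hw : 0 ≤ 1 - a * #P - b * #N := by linarith
  have h : s j - a * ∑ k ∈ P, (s j - s k) - b * ∑ k ∈ N, (s j + s k)
      = (1 - a * #P - b * #N) * s j + a * ∑ k ∈ P, s k - b * ∑ k ∈ N, s k := by
    simp only [sum_sub_distrib, sum_add_distrib, sum_const, nsmul_eq_mul]
    ring
  rw [h]
  calc _ ≤ |(1 - a * #P - b * #N) * s j + a * ∑ k ∈ P, s k| + |b * ∑ k ∈ N, s k| :=
        abs_sub _ _
    _ ≤ |(1 - a * #P - b * #N) * s j| + |a * ∑ k ∈ P, s k| + |b * ∑ k ∈ N, s k| := by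
      gcongr; exact abs_add_le _ _
    _ ≤ _ := by
      rw [abs_mul, abs_mul, abs_mul, abs_of_nonneg hw, abs_of_nonneg ha, abs_of_nonneg hb]
      gcongr <;> exact abs_sum_le_sum_abs _ _

lemma flip_bound_le_of_mem {i : ι} (hi : i ∈ P) (ha : 0 ≤ a) (hb : 0 ≤ b)
    (hab : a * #P + b * #N ≤ 1) (hM : ∀ k, |s k| ≤ M) :
    (1 - a * #P - b * #N) * |s j| + a * ∑ k ∈ P, |s k| + b * ∑ k ∈ N, |s k|
      ≤ a * |s i| + (1 - a) * M := by
  have hP := sum_le_add_card_sub_one_mul_of_mem (f := fun k => |s k|) hi fun k _ => hM k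
  have hN : ∑ k ∈ N, |s k| ≤ #N * M := by
    simpa using sum_le_card_nsmul N (fun k => |s k|) M fun k _ => hM k
  have hj : (1 - a * #P - b * #N) * |s j| ≤ (1 - a * #P - b * #N) * M := by
    gcongr
    · linarith
    · exact hM j
  nlinarith [mul_le_mul_of_nonneg_left hP ha, mul_le_mul_of_nonneg_left hN hb]

end FlipUpdate

theorem state_flipping_neighbor_one_step_bound_general
    {n : ℕ} (hn : 3 ≤ n)
    (α β : ℝ) (hα : 0 < α) (hβ : 0 < β)
    (hαβ : α + β ≤ 1 / ((n : ℝ) - 1))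
    (Np Nd : Fin n → Finset (Fin n))
    (hNp : ∀ i, i ∉ Np i) (hNd : ∀ i, i ∉ Nd i)
    (B D : ℝ) (hB : B = 0 ∨ B = 1) (hD : D = 0 ∨ D = 1)
    (s s' : Fin n → ℝ)
    (hupd : ∀ k, s' k = s k - α * B * (∑ j ∈ Np k, (s k - s j))
        - β * D * (∑ j ∈ Nd k, (s k + s j)))
    (i j : Fin n)
    (hedge : (i ∈ Np j ∧ B = 1) ∨ (i ∈ Nd j ∧ D = 1)) :
    |s' j| ≤ min α β * |s i| + (1 - min α β) * Mmax hn s := by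
  have hM := abs_le_Mmax hn s
  obtain ⟨hc, hcα⟩ := mul_mem_Icc_of_eq_zero_or_eq_one hα.le hB
  obtain ⟨hd, hdβ⟩ := mul_mem_Icc_of_eq_zero_or_eq_one hβ.le hD
  have hweights : α * B * #(Np j) + β * D * #(Nd j) ≤ 1 := by
    have hn1 : (0 : ℝ) < n - 1 := by
      have : (3 : ℝ) ≤ n := by exact_mod_cast hn
      linarith
    have hp := cast_card_le_card_sub_one_of_notMem (hNp j)
    have hq := cast_card_le_card_sub_one_of_notMem (hNd j)
    rw [Fintype.card_fin] at hp hq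
    rw [le_div_iff₀ hn1] at hαβ
    nlinarith [mul_le_mul hcα hp (Nat.cast_nonneg _) hα.le,
      mul_le_mul hdβ hq (Nat.cast_nonneg _) hβ.le]
  rw [hupd j]
  refine (abs_flip_update_le s _ _ j hc hd hweights).trans ?_
  rcases hedge with ⟨hi, rfl⟩ | ⟨hi, rfl⟩
  · calc _ ≤ α * 1 * |s i| + (1 - α * 1) * Mmax hn s :=
          flip_bound_le_of_mem s _ _ j hi hc hd hweights hM
      _ ≤ _ := by rw [mul_one]; exact mul_add_one_sub_mul_le_of_le (min_le_left _ _) (hM i)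
  · calc _ ≤ β * 1 * |s i| + (1 - β * 1) * Mmax hn s := by
          have := flip_bound_le_of_mem s (Nd j) (Np j) j hi hd hc (by linarith) hM
          linarith
      _ ≤ _ := by rw [mul_one]; exact mul_add_one_sub_mul_le_of_le (min_le_right _ _) (hM i)

/-- if `α + β ≤ 1/(n-1)` and at time `t` either `i ∈ N_j^+(t)` with
`B_t = 1` or `i ∈ N_j^-(t)` with `D_t = 1`, then
`|s_j(t+1)| ≤ min{α,β}·|s_i(t)| + (1 - min{α,β})·M(t)`. -/
theorem state_flipping_neighbor_one_step_bound
    {n : ℕ} (hn : 3 ≤ n)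
    (α β : ℝ) (hα : 0 < α) (hβ : 0 < β)
    (hαβ : α + β ≤ 1 / ((n : ℝ) - 1))
    (Np Nd : Fin n → Finset (Fin n))
    (hNp : ∀ i, i ∉ Np i) (hNd : ∀ i, i ∉ Nd i)
    (hdisj : ∀ i, Disjoint (Np i) (Nd i))
    (B D : ℝ) (hB : B = 0 ∨ B = 1) (hD : D = 0 ∨ D = 1)
    (s s' : Fin n → ℝ)
    (hupd : ∀ k, s' k = s k - α * B * (∑ j ∈ Np k, (s k - s j))
        - β * D * (∑ j ∈ Nd k, (s k + s j)))
    (i j : Fin n) (hij : i ≠ j)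
    (hedge : (i ∈ Np j ∧ B = 1) ∨ (i ∈ Nd j ∧ D = 1)) :
    |s' j| ≤ min α β * |s i| + (1 - min α β) * Mmax hn s :=
  state_flipping_neighbor_one_step_bound_general hn α β hα hβ hαβ Np Nd hNp hNd B D hB hD s s' hupd
    i j hedge
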